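/- arXiv:2502.08096 — 4 statements merged into one kernel-verified Lean document; each statement's English description precedes it below -/
import Mathlib

section
/- Define p : ℤ → ℝ by p(n) = 0 for -5 ≤ n ≤ -1, p(0) = 1, and p(i) = (1/6)·(p(i-1) + p(i-2) + p(i-3) + p(i-4) + p(i-5) + p(i-6)) for i ≥ 1. Then the sequence p(i) converges to 2/7 as i → ∞. -/
/-!
If every term of `u` is the average of the `k` terms before it, any convex set containing one
window `u n, …, u (n + k - 1)` contains all later terms. Knowing `c = u (n + k)`, each term of the
next window averages `c` with `k - 1` terms of `[a, b]`, so the window interval shrinks by the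
factor `(k - 1) / k` every `k` steps. The weighted sum `∑ (j + 1) u (n + j)` is invariant, so its
centre of mass lies in every window interval and is the limit. For the dice, the window
`p (-5), …, p 0` gives `6 / 21 = 2 / 7`.
-/

open Filter Finset Topology

def IsMovingAverage (k : ℕ) (u : ℕ → ℝ) : Prop :=
  ∀ n, u (n + k) = (∑ j ∈ range k, u (n + j)) / k

namespace IsMovingAverage

variable {k : ℕ} {u : ℕ → ℝ}

theorem next_mem_of_window (hu : IsMovingAverage k u) (hk : 0 < k) {s : Set ℝ}
    (hs : Convex ℝ s) {n : ℕ} (h : ∀ j < k, u (n + j) ∈ s) : u (n + k) ∈ s := by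
  have hmass : (range k).centerMass (fun _ => (1 : ℝ)) (fun j => u (n + j)) ∈ s :=
    hs.centerMass_mem (by simp) (by simpa using hk) (by simpa using h)
  simpa [hu n, Finset.centerMass, div_eq_inv_mul] using hmass

theorem window_succ (hu : IsMovingAverage k u) (hk : 0 < k) {s : Set ℝ} (hs : Convex ℝ s)
    {n : ℕ} (h : ∀ j < k, u (n + j) ∈ s) : ∀ j < k, u (n + 1 + j) ∈ s := by
  intro j hj
  by_cases hlast : j + 1 < k
  · simpa [add_assoc, add_comm 1 j] using h (j + 1) hlast
  · rw [show n + 1 + j = n + k by omega]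
    exact hu.next_mem_of_window hk hs h

theorem window_of_le (hu : IsMovingAverage k u) (hk : 0 < k) {s : Set ℝ} (hs : Convex ℝ s)
    {n m : ℕ} (hnm : n ≤ m) (h : ∀ j < k, u (n + j) ∈ s) : ∀ j < k, u (m + j) ∈ s := by
  induction m, hnm using Nat.le_induction with
  | base => exact h
  | succ m _ ih => exact hu.window_succ hk hs ih

theorem mem_of_le (hu : IsMovingAverage k u) (hk : 0 < k) {s : Set ℝ} (hs : Convex ℝ s)
    {n i : ℕ} (hni : n ≤ i) (h : ∀ j < k, u (n + j) ∈ s) : u i ∈ s :=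
  hu.window_of_le hk hs hni h 0 hk

theorem weightedSum_succ (hu : IsMovingAverage k u) (hk : 0 < k) (n : ℕ) :
    ∑ j ∈ range k, ((j : ℝ) + 1) * u (n + 1 + j) =
      ∑ j ∈ range k, ((j : ℝ) + 1) * u (n + j) := by
  have hsum : ∑ j ∈ range k, u (n + j) = k * u (n + k) := by
    rw [hu n]; field_simp
  -- both sides equal `∑ j ∈ range (k + 1), j * u (n + j)`
  have hshift := sum_range_succ' (fun j => (j : ℝ) * u (n + j)) k
  rw [sum_range_succ] at hshift
  simp only [add_mul, one_mul, sum_add_distrib, hsum]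
  simp only [Nat.cast_add, Nat.cast_one, Nat.cast_zero, zero_mul, add_zero, add_mul, one_mul,
    sum_add_distrib, add_right_comm n 1, add_assoc n] at hshift ⊢
  linarith

theorem centerMass_window (hu : IsMovingAverage k u) (hk : 0 < k) (n : ℕ) :
    (range k).centerMass (fun j => (j : ℝ) + 1) (fun j => u (n + j)) =
      (range k).centerMass (fun j => (j : ℝ) + 1) u := by
  induction n with
  | zero => simp
  | succ n ih =>
    rw [← ih]
    simp only [Finset.centerMass, smul_eq_mul, hu.weightedSum_succ hk]

theorem centerMass_mem (hu : IsMovingAverage k u) (hk : 0 < k) {s : Set ℝ} (hs : Convex ℝ s)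
    {n : ℕ} (h : ∀ j < k, u (n + j) ∈ s) :
    (range k).centerMass (fun j => (j : ℝ) + 1) u ∈ s := by
  rw [← hu.centerMass_window hk n]
  refine hs.centerMass_mem (fun j _ => by positivity) ?_ (by simpa using h)
  exact sum_pos (fun j _ => by positivity) (nonempty_range_iff.mpr hk.ne')

theorem window_contract (hu : IsMovingAverage k u) (hk : 0 < k) {n : ℕ} {a b : ℝ}
    (h : ∀ j < k, u (n + j) ∈ Set.Icc a b) :
    ∀ j < k, u (n + k + j) ∈
      Set.Icc (((k - 1) * a + u (n + k)) / k) (((k - 1) * b + u (n + k)) / k) := by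
  have hk' : (0 : ℝ) < k := by exact_mod_cast hk
  have hmem : ∀ i, n ≤ i → u i ∈ Set.Icc a b := fun i hi =>
    hu.mem_of_le hk (convex_Icc a b) hi h
  obtain ⟨ha, hb⟩ := hmem (n + k) (by omega)
  intro j hj
  rcases Nat.eq_zero_or_pos j with rfl | hj0
  · rw [add_zero, Set.mem_Icc, div_le_iff₀ hk', le_div_iff₀ hk']
    have hk1 : (1 : ℝ) ≤ k := by exact_mod_cast hk
    constructor <;> nlinarith
  have hrec := hu (n + j)
  rw [show n + j + k = n + k + j by omega] at hrec
  rw [hrec, Set.mem_Icc, div_le_div_iff_of_pos_right hk', div_le_div_iff_of_pos_right hk']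
  -- the average defining `u (n + k + j)` contains the term `u (n + k)` at index `k - j`
  have hterm : u (n + j + (k - j)) = u (n + k) := by congr 1; omega
  have hkj : k - j ∈ range k := mem_range.mpr (by omega)
  have hlow := single_le_sum (f := fun i => u (n + j + i) - a)
    (fun i _ => sub_nonneg.mpr (hmem _ (by omega)).1) hkj
  have hupp := single_le_sum (f := fun i => b - u (n + j + i))
    (fun i _ => sub_nonneg.mpr (hmem _ (by omega)).2) hkj
  simp only [sum_sub_distrib, sum_const, card_range, nsmul_eq_mul, hterm] at hlow hupp
  constructor <;> linarith

theorem exists_window_Icc (hu : IsMovingAverage k u) (hk : 0 < k) {n : ℕ} {a b : ℝ}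
    (h : ∀ j < k, u (n + j) ∈ Set.Icc a b) (t : ℕ) :
    ∃ a' b', b' - a' = ((k - 1) / k) ^ t * (b - a) ∧
      ∀ j < k, u (n + t * k + j) ∈ Set.Icc a' b' := by
  induction t with
  | zero => exact ⟨a, b, by simp, by simpa using h⟩
  | succ t ih =>
    obtain ⟨a', b', hwidth, hwin⟩ := ih
    set c := u (n + t * k + k)
    refine ⟨((k - 1) * a' + c) / k, ((k - 1) * b' + c) / k, ?_, fun j hj => ?_⟩
    · rw [pow_succ, mul_comm _ ((k - 1) / k : ℝ), mul_assoc, ← hwidth]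
      ring
    · rw [show n + (t + 1) * k = n + t * k + k by ring]
      exact hu.window_contract hk hwin j hj

theorem abs_sub_centerMass_le (hu : IsMovingAverage k u) (hk : 0 < k) {a b : ℝ}
    (h : ∀ j < k, u j ∈ Set.Icc a b) (i : ℕ) :
    |u i - (range k).centerMass (fun j => (j : ℝ) + 1) u| ≤
      ((k - 1) / k) ^ (i / k) * (b - a) := by
  obtain ⟨a', b', hwidth, hwin⟩ := hu.exists_window_Icc hk (n := 0) (by simpa using h) (i / k)
  rw [zero_add] at hwin
  have hui := hu.mem_of_le hk (convex_Icc a' b') (Nat.div_mul_le_self i k) hwin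
  have hL := hu.centerMass_mem hk (convex_Icc a' b') hwin
  rw [← hwidth, abs_le]
  constructor <;> linarith [hui.1, hui.2, hL.1, hL.2]

theorem tendsto_centerMass (hu : IsMovingAverage k u) (hk : 0 < k) :
    Tendsto u atTop (𝓝 ((range k).centerMass (fun j => (j : ℝ) + 1) u)) := by
  set B := ∑ j ∈ range k, |u j|
  have hB : ∀ j < k, u j ∈ Set.Icc (-B) B := fun j hj =>
    abs_le.mp (single_le_sum (f := fun j => |u j|) (fun _ _ => abs_nonneg _) (mem_range.mpr hj))
  have hratio : Tendsto (fun i => ((k - 1) / k : ℝ) ^ (i / k)) atTop (𝓝 0) := by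
    have hk' : (0 : ℝ) < k := by exact_mod_cast hk
    refine (tendsto_pow_atTop_nhds_zero_of_lt_one ?_ ?_).comp (Nat.tendsto_div_const_atTop hk.ne')
    · exact div_nonneg (by linarith [(Nat.one_le_cast (α := ℝ)).mpr hk]) hk'.le
    · rw [div_lt_one hk']; linarith
  refine tendsto_iff_norm_sub_tendsto_zero.mpr (squeeze_zero_norm
    (fun i => (norm_norm _).le.trans (hu.abs_sub_centerMass_le hk hB i)) ?_)
  simpa using hratio.mul_const (B - -B)

end IsMovingAverage

theorem dice_hitting_prob_tendsto (p : ℤ → ℝ)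
    (hneg : ∀ n : ℤ, -5 ≤ n → n ≤ -1 → p n = 0)
    (h0 : p 0 = 1)
    (hrec : ∀ i : ℤ, 1 ≤ i →
      p i = (1/6) * (p (i-1) + p (i-2) + p (i-3) + p (i-4) + p (i-5) + p (i-6))) :
    Tendsto (fun i : ℕ => p i) atTop (nhds (2/7)) := by
  set v : ℕ → ℝ := fun n => p (n - 5)
  have hv : IsMovingAverage 6 v := fun n => by
    have h := hrec (n + 1) (by omega)
    simp only [v, sum_range_succ, sum_range_zero]
    push_cast
    ring_nf at h ⊢
    linarith
  have hlim : (range 6).centerMass (fun j => (j : ℝ) + 1) v = 2 / 7 := by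
    simp only [v, Finset.centerMass, sum_range_succ, sum_range_zero, smul_eq_mul]
    norm_num [h0, hneg]
  have h := hv.tendsto_centerMass (by norm_num)
  rw [hlim] at h
  simpa [v] using (tendsto_add_atTop_iff_nat 5).mpr h
end

section
/- Every complex root λ of the polynomial P(z) = z^6 - (1/6)(z^5 + z^4 + z^3 + z^2 + z + 1) with λ ≠ 1 satisfies |λ| < 1. -/
theorem char_poly_other_roots_small (lam : ℂ)
    (hroot : lam^6 - (1/6) * (lam^5 + lam^4 + lam^3 + lam^2 + lam + 1) = 0)
    (hne : lam ≠ 1) :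
    ‖lam‖ < 1 := by
  by_contra h
  push_neg at h
  set r := ‖lam‖ with hrdef
  have heq : 6 * lam^6 = lam^5 + lam^4 + lam^3 + lam^2 + lam + 1 := by
    linear_combination 6 * hroot
  have hlam0 : lam ≠ 0 := by
    intro h0; rw [h0] at hroot; norm_num at hroot
  -- step 1 : r = 1
  have h1 : ‖6 * lam^6‖ = 6 * r^6 := by
    rw [norm_mul, norm_pow]; norm_num [hrdef]
  have h2 : ‖lam^5+lam^4+lam^3+lam^2+lam+1‖ ≤ r^5+r^4+r^3+r^2+r+1 := by
    have t1 := norm_add_le (lam^5+lam^4+lam^3+lam^2+lam) 1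
    have t2 := norm_add_le (lam^5+lam^4+lam^3+lam^2) lam
    have t3 := norm_add_le (lam^5+lam^4+lam^3) (lam^2)
    have t4 := norm_add_le (lam^5+lam^4) (lam^3)
    have t5 := norm_add_le (lam^5) (lam^4)
    simp only [norm_pow, norm_one] at t1 t2 t3 t4 t5
    linarith
  have hpow : ∀ k : ℕ, k ≤ 5 → r^k ≤ r^5 := fun k hk => pow_le_pow_right₀ h hk
  have hA : 6 * r^6 ≤ 6 * r^5 := by
    rw [← h1, heq]
    have h0 := hpow 0 (by norm_num)
    have hp1 := hpow 1 (by norm_num)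
    have hp2 := hpow 2 (by norm_num)
    have hp3 := hpow 3 (by norm_num)
    have hp4 := hpow 4 (by norm_num)
    simp only [pow_zero, pow_one] at h0 hp1
    linarith
  have hrpos : 0 < r := lt_of_lt_of_le one_pos h
  have h5pos : 0 < r^5 := pow_pos hrpos 5
  have hrle : r ≤ 1 := by
    have hrr : r^5 * r ≤ r^5 * 1 := by nlinarith [hA]
    exact le_of_mul_le_mul_left hrr h5pos
  have hr1 : r = 1 := le_antisymm hrle h
  -- step 2 : conjugate
  have hmc : lam * (starRingEnd ℂ) lam = 1 := by
    rw [Complex.mul_conj]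
    norm_cast
    rw [Complex.normSq_eq_norm_sq, ← hrdef, hr1, one_pow]
  have hc : (starRingEnd ℂ) lam = lam⁻¹ := eq_inv_of_mul_eq_one_right hmc
  set c := (starRingEnd ℂ) lam with hcdef
  have h6 : c + c^2 + c^3 + c^4 + c^5 + c^6 = 6 := by
    have x := lam * c
    linear_combination (-(c^6)) * heq +
      (6*(1 + lam*c + (lam*c)^2 + (lam*c)^3 + (lam*c)^4 + (lam*c)^5)
        - c*(1 + lam*c + (lam*c)^2 + (lam*c)^3 + (lam*c)^4)
        - c^2*(1 + lam*c + (lam*c)^2 + (lam*c)^3)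
        - c^3*(1 + lam*c + (lam*c)^2)
        - c^4*(1 + lam*c)
        - c^5) * hmc
  have habs_c : ‖c‖ = 1 := by
    rw [hcdef, Complex.norm_conj, ← hrdef, hr1]
  have hle : ∀ j : ℕ, (c^j).re ≤ 1 := by
    intro j
    calc (c^j).re ≤ ‖c^j‖ := Complex.re_le_norm _
      _ = 1 := by rw [norm_pow, habs_c, one_pow]
  have h6re : c.re + (c^2).re + (c^3).re + (c^4).re + (c^5).re + (c^6).re = 6 := by
    have := congrArg Complex.re h6
    simpa [Complex.add_re] using this
  have hcre : c.re = 1 := by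
    have l1 := hle 1
    rw [pow_one] at l1
    have l2 := hle 2; have l3 := hle 3; have l4 := hle 4
    have l5 := hle 5; have l6 := hle 6
    linarith
  have hcim : c.im = 0 := by
    have hsq : c.re * c.re + c.im * c.im = 1 := by
      have := Complex.sq_norm c
      rw [habs_c, Complex.normSq_apply] at this
      linarith [this]
    nlinarith [sq_nonneg c.im]
  have hc1 : c = 1 := by
    apply Complex.ext <;> simp [hcre, hcim]
  have : lam = 1 := by
    have := congrArg (starRingEnd ℂ) hc1
    simpa [hcdef] using this
  exact hne this
end

section
/- Let p : ℤ → ℝ satisfy the recurrence p(i) = (1/6)·∑_{j=1}^{6} p(i-j) for i ≥ 1 with p(0)=1 and p(n)=0 for -5 ≤ n ≤ -1. If lim_{i→∞} p(i) = L exists, then (1/n)·∑_{i=1}^{n} p(i) → L and therefore L = 2/7. -/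
open Filter

theorem dice_hitting_prob_cesaro (p : ℤ → ℝ) (L : ℝ)
    (hneg : ∀ n : ℤ, -5 ≤ n → n ≤ -1 → p n = 0)
    (h0 : p 0 = 1)
    (hrec : ∀ i : ℤ, 1 ≤ i →
      p i = (1/6) * (p (i-1) + p (i-2) + p (i-3) + p (i-4) + p (i-5) + p (i-6)))
    (hlim : Tendsto (fun i : ℕ => p i) atTop (nhds L)) :
    Tendsto (fun n : ℕ => (1 / (n : ℝ)) * ∑ i ∈ Finset.Icc 1 n, p i)
      atTop (nhds L) ∧ L = 2/7 := by
  have hshift : ∀ k : ℕ, Tendsto (fun n : ℕ => p ((n : ℤ) - k)) atTop (nhds L) := by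
    intro k
    have h1 : Tendsto (fun n : ℕ => p ((n - k : ℕ) : ℤ)) atTop (nhds L) :=
      hlim.comp (tendsto_sub_atTop_nat k)
    refine h1.congr' ?_
    filter_upwards [eventually_ge_atTop k] with n hn
    congr 1
    omega
  -- invariant T
  set T : ℤ → ℝ := fun i => 6 * p i + 5 * p (i-1) + 4 * p (i-2) + 3 * p (i-3)
      + 2 * p (i-4) + p (i-5) with hT
  have hTstep : ∀ i : ℤ, 1 ≤ i → T i = T (i - 1) := by
    intro i hi
    have h := hrec i hi
    simp only [hT]
    have e1 : i - 1 - 1 = i - 2 := by ring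
    have e2 : i - 1 - 2 = i - 3 := by ring
    have e3 : i - 1 - 3 = i - 4 := by ring
    have e4 : i - 1 - 4 = i - 5 := by ring
    have e5 : i - 1 - 5 = i - 6 := by ring
    rw [e1, e2, e3, e4, e5]
    linarith [h]
  have hTconst : ∀ n : ℕ, T (n : ℤ) = 6 := by
    intro n
    induction n with
    | zero =>
        simp only [hT, Nat.cast_zero]
        have n1 : p (0 - 1 : ℤ) = 0 := hneg _ (by norm_num) (by norm_num)
        have n2 : p (0 - 2 : ℤ) = 0 := hneg _ (by norm_num) (by norm_num)
        have n3 : p (0 - 3 : ℤ) = 0 := hneg _ (by norm_num) (by norm_num)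
        have n4 : p (0 - 4 : ℤ) = 0 := hneg _ (by norm_num) (by norm_num)
        have n5 : p (0 - 5 : ℤ) = 0 := hneg _ (by norm_num) (by norm_num)
        rw [n1, n2, n3, n4, n5, h0]; ring
    | succ m ih =>
        have := hTstep ((m : ℤ) + 1) (by omega)
        have e : ((m : ℤ) + 1) - 1 = (m : ℤ) := by ring
        rw [e] at this
        rw [Nat.cast_succ, this, ih]
  have hTlim : Tendsto (fun n : ℕ => T (n : ℤ)) atTop (nhds (21 * L)) := by
    have h0' := hshift 0
    have h1' := hshift 1
    have h2' := hshift 2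
    have h3' := hshift 3
    have h4' := hshift 4
    have h5' := hshift 5
    simp only [Nat.cast_ofNat, CharP.cast_eq_zero, sub_zero, Nat.cast_one] at *
    have : Tendsto (fun n : ℕ => 6 * p (n:ℤ) + 5 * p ((n:ℤ)-1) + 4 * p ((n:ℤ)-2)
        + 3 * p ((n:ℤ)-3) + 2 * p ((n:ℤ)-4) + p ((n:ℤ)-5)) atTop
        (nhds (6*L + 5*L + 4*L + 3*L + 2*L + L)) := by
      exact ((((((h0'.const_mul 6).add (h1'.const_mul 5)).add (h2'.const_mul 4)).add
        (h3'.const_mul 3)).add (h4'.const_mul 2)).add h5')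
    have heq : 6*L + 5*L + 4*L + 3*L + 2*L + L = 21 * L := by ring
    rw [heq] at this
    exact this
  have hL : L = 2 / 7 := by
    have hconst : Tendsto (fun _ : ℕ => (6 : ℝ)) atTop (nhds 6) := tendsto_const_nhds
    have : (21 : ℝ) * L = 6 := by
      have h6 : Tendsto (fun n : ℕ => T (n : ℤ)) atTop (nhds 6) :=
        hconst.congr (fun n => (hTconst n).symm)
      exact tendsto_nhds_unique hTlim h6
    linarith
  constructor
  · have h1 : Tendsto (fun n : ℕ => p ((n + 1 : ℕ) : ℤ)) atTop (nhds L) :=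
      hlim.comp (tendsto_add_atTop_nat 1)
    have hces := h1.cesaro
    refine hces.congr (fun n => ?_)
    rw [one_div, ← Finset.Ico_add_one_right_eq_Icc, Finset.sum_Ico_eq_sum_range]
    congr 1
    exact Finset.sum_congr rfl fun i _ => by rw [Nat.add_comm]
  · exact hL
end

section
/- For the sequence of partial sums of i.i.d. fair six-sided dice rolls, with probability 1 every sufficiently structured target is eventually exceeded; in particular, with probability 1, for every k there exists i such that the first i partial sums include at least k primes, i.e., L_k < ∞ almost surely. -/
open MeasureTheory ProbabilityTheory
open scoped ENNReal

lemma num_helper6 {a b : ℕ} (h : 6 * a ≤ 5 * b) :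
    (a : ℝ≥0∞) * (1/6) ≤ 5 / 6 * ((b : ℝ≥0∞) * (1/6)) := by
  have h6 : (6 : ℝ≥0∞) * 6⁻¹ = 1 := ENNReal.mul_inv_cancel (by norm_num) (by norm_num)
  have e1 : (a : ℝ≥0∞) * (1/6) = ((6 * a : ℕ) : ℝ≥0∞) * (6⁻¹ * 6⁻¹) := by
    push_cast
    rw [mul_mul_mul_comm, h6, one_mul, one_div]
  have e2 : (5:ℝ≥0∞) / 6 * ((b : ℝ≥0∞) * (1/6)) = ((5 * b : ℕ) : ℝ≥0∞) * (6⁻¹ * 6⁻¹) := by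
    push_cast
    rw [div_eq_mul_inv, one_div, mul_mul_mul_comm]
  rw [e1, e2]
  exact mul_le_mul_left (by exact_mod_cast h) _

section Core

variable {Ω : Type*} [MeasurableSpace Ω] (μ : Measure Ω) [IsProbabilityMeasure μ]
  (d : ℕ → Ω → ℕ) (s : ℕ → Ω → ℕ)

lemma s_succ (hs : ∀ i ω, s i ω = ∑ j ∈ Finset.range i, d j ω) (i : ℕ) (ω : Ω) :
    s (i+1) ω = s i ω + d i ω := by
  simp [hs, Finset.sum_range_succ]

lemma s_zero (hs : ∀ i ω, s i ω = ∑ j ∈ Finset.range i, d j ω) (ω : Ω) : s 0 ω = 0 := by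
  simp [hs]

lemma s_mono (hrange : ∀ i ω, d i ω ∈ Finset.Icc 1 6)
    (hs : ∀ i ω, s i ω = ∑ j ∈ Finset.range i, d j ω) (ω : Ω) :
    StrictMono (fun i => s i ω) := by
  apply strictMono_nat_of_lt_succ
  intro n
  have h1 := (Finset.mem_Icc.mp (hrange n ω)).1
  have h2 := s_succ d s hs n ω
  show s n ω < s (n+1) ω
  omega

set_option maxHeartbeats 1000000 in
lemma avoid_step (hmeas : ∀ i, Measurable (d i))
    (hindep : iIndepFun d μ)
    (hrange : ∀ i ω, d i ω ∈ Finset.Icc 1 6)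
    (hunif : ∀ i k, k ∈ Finset.Icc 1 6 → μ {ω | d i ω = k} = 1/6)
    (hs : ∀ i ω, s i ω = ∑ j ∈ Finset.range i, d j ω)
    (P : ℕ → Prop) (p : ℕ) (hp0 : 0 < p) (hp : ∀ x, P x → x < p) :
    μ {ω | (∀ j, 1 ≤ j → ¬ P (s j ω)) ∧ (∀ j, 1 ≤ j → s j ω ≠ p)}
      ≤ 5 / 6 * μ {ω | ∀ j, 1 ≤ j → ¬ P (s j ω)} := by
  classical
  set Good : List ℕ → Prop := fun c =>
    (∀ x ∈ c, x ∈ Finset.Icc 1 6) ∧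
    (∀ j, 1 ≤ j → j ≤ c.length → ¬ P ((c.take j).sum)) ∧
    (∀ j ≤ c.length, (c.take j).sum < p) ∧ p ≤ c.sum + 6 with hGood
  set cyl : List ℕ → Set Ω := fun c => {ω | ∀ j < c.length, d j ω = c.getD j 0} with hcyl
  set F : List ℕ → Set Ω := fun c => cyl c ∩ {ω | p < c.sum + d c.length ω} with hFdef
  set G : List ℕ → Set Ω := fun c => cyl c ∩ {ω | p ≤ c.sum + d c.length ω} with hGdef
  -- partial sums along a cylinder
  have key_sum : ∀ (c : List ℕ) (ω : Ω), ω ∈ cyl c → ∀ j ≤ c.length, s j ω = (c.take j).sum := by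
    intro c ω hω j hj
    induction j with
    | zero => simp [s_zero d s hs]
    | succ n ih =>
      have hn : n < c.length := by omega
      rw [s_succ d s hs, ih (by omega), hω n hn, List.getD_eq_getElem _ _ hn,
        List.sum_take_succ _ _ hn]
  have good_sum_lt : ∀ c, Good c → c.sum < p := by
    intro c gc
    have := gc.2.2.1 c.length le_rfl
    rwa [List.take_length] at this
  -- measurability
  have mcyl : ∀ c, MeasurableSet (cyl c) := by
    intro c
    have : cyl c = ⋂ (j : ℕ), ⋂ (_ : j < c.length), d j ⁻¹' {c.getD j 0} := by
      ext ω; simp [hcyl, Set.mem_iInter]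
    rw [this]
    exact MeasurableSet.iInter fun j => MeasurableSet.iInter fun _ =>
      hmeas j (measurableSet_singleton _)
  have mG : ∀ c, MeasurableSet (G c) := by
    intro c
    exact (mcyl c).inter (hmeas c.length (MeasurableSet.of_discrete (s := {v : ℕ | p ≤ c.sum + v})))
  -- the cover by F-cylinders
  have hcover : {ω | (∀ j, 1 ≤ j → ¬ P (s j ω)) ∧ (∀ j, 1 ≤ j → s j ω ≠ p)}
      ⊆ ⋃ (c : {c : List ℕ // Good c}), F c.1 := by
    rintro ω ⟨hP, hmiss⟩
    have hmono := s_mono d s hrange hs ω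
    have hex : ∃ t, p ≤ s t ω := ⟨p, le_trans hmono.le_apply le_rfl⟩
    have ht := Nat.find_spec hex
    have htmin : ∀ m < Nat.find hex, s m ω < p := fun m hm =>
      lt_of_not_ge (Nat.find_min hex hm)
    have ht1 : 1 ≤ Nat.find hex := by
      rcases Nat.eq_zero_or_pos (Nat.find hex) with h0 | h1
      · exfalso; rw [h0] at ht; rw [s_zero d s hs] at ht; omega
      · exact h1
    obtain ⟨u, hu⟩ : ∃ u, Nat.find hex = u + 1 := ⟨Nat.find hex - 1, by omega⟩
    rw [hu] at ht htmin
    set c : List ℕ := List.ofFn (fun i : Fin u => d i ω) with hc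
    have hlen : c.length = u := List.length_ofFn
    have hωc : ω ∈ cyl c := by
      intro j hj
      rw [hlen] at hj
      rw [List.getD_eq_getElem _ _ (by rw [hlen]; exact hj), List.getElem_ofFn]
    have hsum : ∀ j ≤ u, s j ω = (c.take j).sum := by
      intro j hj
      exact key_sum c ω hωc j (by rw [hlen]; exact hj)
    have hcsum : c.sum = s u ω := by
      have h := hsum u le_rfl
      rw [List.take_of_length_le (by omega)] at h
      omega
    have hsucc := s_succ d s hs u ω
    have hdu := Finset.mem_Icc.mp (hrange u ω)
    have hgood : Good c := by
      refine ⟨?_, ?_, ?_, ?_⟩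
      · intro x hx
        rw [hc, List.mem_ofFn] at hx
        obtain ⟨i, rfl⟩ := hx
        exact hrange i ω
      · intro j hj1 hj2
        rw [hlen] at hj2
        rw [← hsum j hj2]
        exact hP j hj1
      · intro j hj
        rw [hlen] at hj
        rw [← hsum j hj]
        exact htmin j (by omega)
      · omega
    refine Set.mem_iUnion.mpr ⟨⟨c, hgood⟩, hωc, ?_⟩
    have hne := hmiss (u+1) (by omega)
    show p < c.sum + d c.length ω
    rw [hlen]
    omega
  -- G c is contained in the avoiding set
  have hGsub : ∀ c, Good c → G c ⊆ {ω | ∀ j, 1 ≤ j → ¬ P (s j ω)} := by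
    rintro c gc ω ⟨hc, hcross⟩ j hj hPj
    have hmono := s_mono d s hrange hs ω
    rcases le_or_gt j c.length with hle | hlt
    · exact gc.2.1 j hj hle (key_sum c ω hc j hle ▸ hPj)
    · have h1 : s (c.length + 1) ω = c.sum + d c.length ω := by
        rw [s_succ d s hs]
        rw [key_sum c ω hc c.length le_rfl, List.take_length]
      have h2 : s (c.length + 1) ω ≤ s j ω := hmono.monotone (by omega)
      have := hp _ hPj
      have : p ≤ c.sum + d c.length ω := hcross
      omega
  -- crossing time is determined: disjointness
  have hlen_eq : ∀ c c' ω, Good c → Good c' → ω ∈ G c → ω ∈ G c' →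
      c.length < c'.length → False := by
    rintro c c' ω gc gc' ⟨hc, hcr⟩ ⟨hc', hcr'⟩ hlt
    have hmono := s_mono d s hrange hs ω
    have h1 : s (c.length + 1) ω = c.sum + d c.length ω := by
      rw [s_succ d s hs, key_sum c ω hc c.length le_rfl, List.take_length]
    have h2 : s c'.length ω = c'.sum := by
      rw [key_sum c' ω hc' c'.length le_rfl, List.take_length]
    have h3 : s (c.length + 1) ω ≤ s c'.length ω := hmono.monotone (by omega)
    have h4 := good_sum_lt c' gc'
    have : p ≤ c.sum + d c.length ω := hcr
    omega
  have hdisj : ∀ c c', Good c → Good c' → c ≠ c' → Disjoint (G c) (G c') := by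
    intro c c' gc gc' hne
    rw [Set.disjoint_left]
    intro ω hω hω'
    apply hne
    have hll : c.length = c'.length := by
      rcases lt_trichotomy c.length c'.length with h | h | h
      · exact absurd (hlen_eq c c' ω gc gc' hω hω' h) not_false
      · exact h
      · exact absurd (hlen_eq c' c ω gc' gc hω' hω h) not_false
    apply List.ext_getElem hll
    intro i hi hi'
    rw [← List.getD_eq_getElem c 0 hi, ← List.getD_eq_getElem c' 0 hi']
    rw [← hω.1 i hi, ← hω'.1 i hi']
  -- measure of cylinder ∩ last-coordinate event
  have hcylV : ∀ (c : List ℕ), (∀ x ∈ c, x ∈ Finset.Icc 1 6) → ∀ (V : Set ℕ) (t : Finset ℕ),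
      (∀ v, v ∈ V ∧ v ∈ Finset.Icc 1 6 ↔ v ∈ t) →
      μ (cyl c ∩ d c.length ⁻¹' V) = (1/6 : ℝ≥0∞) ^ c.length * (t.card * (1/6)) := by
    intro c hc V t ht
    set sets : ℕ → Set ℕ := fun i => if i < c.length then {c.getD i 0} else V with hsets
    have hseteq : cyl c ∩ d c.length ⁻¹' V
        = ⋂ i ∈ Finset.range (c.length + 1), d i ⁻¹' sets i := by
      ext ω
      simp only [Set.mem_inter_iff, Set.mem_iInter, Finset.mem_range, Set.mem_preimage, hcyl,
        Set.mem_setOf_eq, hsets]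
      constructor
      · rintro ⟨h1, h2⟩ i hi
        by_cases hil : i < c.length
        · rw [if_pos hil]
          exact h1 i hil
        · rw [if_neg hil]
          have hi' : i = c.length := by omega
          rwa [hi']
      · intro h
        constructor
        · intro j hj
          have hj' := h j (by omega)
          rwa [if_pos hj] at hj'
        · have hl := h c.length (by omega)
          rwa [if_neg (lt_irrefl _)] at hl
    rw [hseteq, hindep.measure_inter_preimage_eq_mul _ (fun i _ => MeasurableSet.of_discrete)]
    rw [Finset.prod_range_succ]
    have hfirst : ∀ i ∈ Finset.range c.length, μ (d i ⁻¹' sets i) = (1/6 : ℝ≥0∞) := by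
      intro i hi
      rw [Finset.mem_range] at hi
      have hseti : sets i = {c.getD i 0} := if_pos hi
      rw [hseti]
      have hmem : c.getD i 0 ∈ Finset.Icc 1 6 := by
        apply hc
        rw [List.getD_eq_getElem _ _ hi]
        exact List.getElem_mem _
      exact hunif i _ hmem
    have hlast : μ (d c.length ⁻¹' sets c.length) = t.card * (1/6 : ℝ≥0∞) := by
      have hseti : sets c.length = V := if_neg (lt_irrefl _)
      rw [hseti]
      have hU : d c.length ⁻¹' V = ⋃ v ∈ t, d c.length ⁻¹' {v} := by
        ext ω
        simp only [Set.mem_preimage, Set.mem_iUnion, exists_prop, Set.mem_singleton_iff]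
        constructor
        · intro hv
          exact ⟨d c.length ω, (ht (d c.length ω)).mp ⟨hv, hrange c.length ω⟩, rfl⟩
        · rintro ⟨v, hvt, hveq⟩
          rw [hveq]
          exact ((ht v).mpr hvt).1
      rw [hU, measure_biUnion_finset ?_ (fun v _ => hmeas _ (measurableSet_singleton _))]
      · have heach : ∀ v ∈ t, μ (d c.length ⁻¹' {v}) = (1/6 : ℝ≥0∞) := fun v hv =>
          hunif c.length v ((ht v).mpr hv).2
        rw [Finset.sum_congr rfl heach, Finset.sum_const, nsmul_eq_mul]
      · intro a _ b _ hab
        simp only [Function.onFun]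
        rw [Set.disjoint_left]
        intro ω h1 h2
        apply hab
        rw [Set.mem_preimage, Set.mem_singleton_iff] at h1 h2
        rw [← h1, ← h2]
    rw [Finset.prod_congr rfl hfirst, Finset.prod_const, Finset.card_range, hlast]
  -- comparing μ (F c) and μ (G c)
  have hFG : ∀ c, Good c → μ (F c) ≤ 5/6 * μ (G c) := by
    intro c gc
    have hg1 : 1 ≤ p - c.sum ∧ p - c.sum ≤ 6 := by
      have := good_sum_lt c gc
      have := gc.2.2.2
      omega
    have h1 : F c = cyl c ∩ d c.length ⁻¹' {v : ℕ | p < c.sum + v} := rfl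
    have h2 : G c = cyl c ∩ d c.length ⁻¹' {v : ℕ | p ≤ c.sum + v} := rfl
    have e1 := hcylV c gc.1 {v : ℕ | p < c.sum + v} (Finset.Icc (p - c.sum + 1) 6) (by
      intro v
      simp only [Set.mem_setOf_eq, Finset.mem_Icc]
      omega)
    have e2 := hcylV c gc.1 {v : ℕ | p ≤ c.sum + v} (Finset.Icc (p - c.sum) 6) (by
      intro v
      simp only [Set.mem_setOf_eq, Finset.mem_Icc]
      omega)
    rw [h1, h2, e1, e2, Nat.card_Icc, Nat.card_Icc]
    conv_rhs => rw [mul_left_comm]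
    exact mul_le_mul_right (num_helper6 (by omega)) _
  have step1 : μ {ω | (∀ j, 1 ≤ j → ¬ P (s j ω)) ∧ (∀ j, 1 ≤ j → s j ω ≠ p)}
      ≤ μ (⋃ (c : {c : List ℕ // Good c}), F c.1) := measure_mono hcover
  have step2 : μ (⋃ (c : {c : List ℕ // Good c}), F c.1)
      ≤ ∑' (c : {c : List ℕ // Good c}), μ (F c.1) := measure_iUnion_le _
  have step3 : ∑' (c : {c : List ℕ // Good c}), μ (F c.1)
      ≤ ∑' (c : {c : List ℕ // Good c}), 5/6 * μ (G c.1) :=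
    ENNReal.tsum_le_tsum (fun c => hFG c.1 c.2)
  have step4 : ∑' (c : {c : List ℕ // Good c}), (5/6 : ℝ≥0∞) * μ (G c.1)
      = 5/6 * ∑' (c : {c : List ℕ // Good c}), μ (G c.1) := ENNReal.tsum_mul_left
  have step5 : ∑' (c : {c : List ℕ // Good c}), μ (G c.1)
      = μ (⋃ (c : {c : List ℕ // Good c}), G c.1) := by
    have hpd : Pairwise (Function.onFun Disjoint (fun c : {c : List ℕ // Good c} => G c.1)) := by
      intro a b hab
      exact hdisj a.1 b.1 a.2 b.2 (fun h => hab (Subtype.ext h))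
    exact (measure_iUnion hpd (fun c => mG c.1)).symm
  have step6 : μ (⋃ (c : {c : List ℕ // Good c}), G c.1)
      ≤ μ {ω | ∀ j, 1 ≤ j → ¬ P (s j ω)} :=
    measure_mono (Set.iUnion_subset fun c => hGsub c.1 c.2)
  calc μ {ω | (∀ j, 1 ≤ j → ¬ P (s j ω)) ∧ (∀ j, 1 ≤ j → s j ω ≠ p)}
      ≤ ∑' (c : {c : List ℕ // Good c}), μ (F c.1) := le_trans step1 step2
    _ ≤ 5/6 * μ {ω | ∀ j, 1 ≤ j → ¬ P (s j ω)} := by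
        refine le_trans step3 ?_
        rw [step4, step5]
        exact mul_le_mul_right step6 _



lemma avoid_pow (hmeas : ∀ i, Measurable (d i))
    (hindep : iIndepFun d μ)
    (hrange : ∀ i ω, d i ω ∈ Finset.Icc 1 6)
    (hunif : ∀ i k, k ∈ Finset.Icc 1 6 → μ {ω | d i ω = k} = 1/6)
    (hs : ∀ i ω, s i ω = ∑ j ∈ Finset.range i, d j ω)
    (q : ℕ → ℕ) (hq : StrictMono q) (hq0 : ∀ n, 0 < q n) :
    ∀ n, μ {ω | ∀ m, m < n → ∀ j, 1 ≤ j → s j ω ≠ q m} ≤ (5/6 : ℝ≥0∞) ^ n := by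
  intro n
  induction n with
  | zero => simpa using prob_le_one
  | succ n ih =>
    have step := avoid_step μ d s hmeas hindep hrange hunif hs
      (fun x => ∃ m, m < n ∧ x = q m) (q n) (hq0 n)
      (by rintro x ⟨m, hm, rfl⟩; exact hq hm)
    have hA : {ω | ∀ m, m < n + 1 → ∀ j, 1 ≤ j → s j ω ≠ q m}
        = {ω | (∀ j, 1 ≤ j → ¬ (∃ m, m < n ∧ s j ω = q m)) ∧ (∀ j, 1 ≤ j → s j ω ≠ q n)} := by
      ext ω
      simp only [Set.mem_setOf_eq]
      constructor
      · intro h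
        refine ⟨fun j hj hex => ?_, fun j hj => h n (by omega) j hj⟩
        obtain ⟨m, hm, hx⟩ := hex
        exact h m (by omega) j hj hx
      · rintro ⟨h1, h2⟩ m hm j hj hx
        rcases Nat.lt_or_ge m n with h | h
        · exact h1 j hj ⟨m, h, hx⟩
        · have hmn : m = n := by omega
          exact h2 j hj (hmn ▸ hx)
    have hB : {ω | ∀ j, 1 ≤ j → ¬ (∃ m, m < n ∧ s j ω = q m)}
        = {ω | ∀ m, m < n → ∀ j, 1 ≤ j → s j ω ≠ q m} := by
      ext ω
      simp only [Set.mem_setOf_eq]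
      constructor
      · intro h m hm j hj hx
        exact h j hj ⟨m, hm, hx⟩
      · rintro h j hj ⟨m, hm, hx⟩
        exact h m hm j hj hx
    calc μ {ω | ∀ m, m < n + 1 → ∀ j, 1 ≤ j → s j ω ≠ q m}
        ≤ 5/6 * μ {ω | ∀ j, 1 ≤ j → ¬ (∃ m, m < n ∧ s j ω = q m)} := by
          rw [hA]; exact step
      _ ≤ 5/6 * (5/6 : ℝ≥0∞) ^ n := by
          rw [hB]; exact mul_le_mul_right ih _
      _ = (5/6 : ℝ≥0∞) ^ (n + 1) := by rw [pow_succ, mul_comm]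

lemma bad_null (hmeas : ∀ i, Measurable (d i))
    (hindep : iIndepFun d μ)
    (hrange : ∀ i ω, d i ω ∈ Finset.Icc 1 6)
    (hunif : ∀ i k, k ∈ Finset.Icc 1 6 → μ {ω | d i ω = k} = 1/6)
    (hs : ∀ i ω, s i ω = ∑ j ∈ Finset.range i, d j ω) (M : ℕ) :
    μ {ω | ∀ p, Nat.Prime p → M ≤ p → ∀ j, 1 ≤ j → s j ω ≠ p} = 0 := by
  set q : ℕ → ℕ := fun n => Nat.nth Nat.Prime (M + n) with hqdef
  have hq : StrictMono q := fun a b hab =>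
    Nat.nth_strictMono Nat.infinite_setOf_prime (by omega)
  have hq0 : ∀ n, 0 < q n := fun n => (Nat.prime_nth_prime (M + n)).pos
  have hsub : ∀ n, {ω | ∀ p, Nat.Prime p → M ≤ p → ∀ j, 1 ≤ j → s j ω ≠ p}
      ⊆ {ω | ∀ m, m < n → ∀ j, 1 ≤ j → s j ω ≠ q m} := by
    intro n ω hω m _ j hj
    exact hω (q m) (Nat.prime_nth_prime _)
      (le_trans (by omega) (Nat.nth_strictMono Nat.infinite_setOf_prime).le_apply) j hj
  have hle : ∀ n, μ {ω | ∀ p, Nat.Prime p → M ≤ p → ∀ j, 1 ≤ j → s j ω ≠ p}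
      ≤ (5/6 : ℝ≥0∞) ^ n := fun n =>
    le_trans (measure_mono (hsub n))
      (avoid_pow μ d s hmeas hindep hrange hunif hs q hq hq0 n)
  have htend : Filter.Tendsto (fun n => (5/6 : ℝ≥0∞) ^ n) Filter.atTop (nhds 0) :=
    ENNReal.tendsto_pow_atTop_nhds_zero_of_lt_one
      (by rw [ENNReal.div_lt_iff] <;> norm_num)
  have := ge_of_tendsto htend (Filter.Eventually.of_forall hle)
  exact le_antisymm this zero_le


end Core

theorem L_k_finite_almost_surely {Ω : Type*} [MeasurableSpace Ω]
    (μ : Measure Ω) [IsProbabilityMeasure μ]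
    (d : ℕ → Ω → ℕ) (hmeas : ∀ i, Measurable (d i))
    (hindep : iIndepFun d μ)
    (hrange : ∀ i ω, d i ω ∈ Finset.Icc 1 6)
    (hunif : ∀ i k, k ∈ Finset.Icc 1 6 → μ {ω | d i ω = k} = 1/6)
    (s : ℕ → Ω → ℕ) (hs : ∀ i ω, s i ω = ∑ j ∈ Finset.range i, d j ω) :
    μ {ω | ∀ k : ℕ, ∃ i : ℕ,
      k ≤ ((Finset.Icc 1 i).filter fun j => (s j ω).Prime).card} = 1 := by
  classical
  have hmono' : ∀ ω, StrictMono (fun i => s i ω) := fun ω => s_mono d s hrange hs ω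
  set T : Set Ω := {ω | ∀ k : ℕ, ∃ i : ℕ,
      k ≤ ((Finset.Icc 1 i).filter fun j => (s j ω).Prime).card} with hT
  set B : ℕ → Set Ω := fun M => {ω | ∀ p, Nat.Prime p → M ≤ p → ∀ j, 1 ≤ j → s j ω ≠ p}
    with hB
  have hpt : ∀ ω, (∀ M, ∃ p, Nat.Prime p ∧ M ≤ p ∧ ∃ j, 1 ≤ j ∧ s j ω = p) → ω ∈ T := by
    intro ω hω k
    induction k with
    | zero => exact ⟨0, Nat.zero_le _⟩
    | succ k ih =>
      obtain ⟨i, hi⟩ := ih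
      obtain ⟨p, hp, hpM, j, hj1, hjp⟩ := hω (s i ω + 1)
      have hij : i < j := by
        by_contra h
        have hle : s j ω ≤ s i ω := (hmono' ω).monotone (by omega)
        omega
      refine ⟨j, ?_⟩
      have hjm : j ∈ (Finset.Icc 1 j).filter (fun j' => (s j' ω).Prime) := by
        rw [Finset.mem_filter, Finset.mem_Icc]
        refine ⟨⟨hj1, le_rfl⟩, ?_⟩
        rw [hjp]
        exact hp
      have hsub2 : insert j ((Finset.Icc 1 i).filter fun j' => (s j' ω).Prime)
          ⊆ (Finset.Icc 1 j).filter fun j' => (s j' ω).Prime := by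
        intro x hx
        rcases Finset.mem_insert.mp hx with rfl | hx
        · exact hjm
        · rw [Finset.mem_filter, Finset.mem_Icc] at hx ⊢
          exact ⟨⟨hx.1.1, by omega⟩, hx.2⟩
      have hnotmem : j ∉ (Finset.Icc 1 i).filter fun j' => (s j' ω).Prime := by
        intro hmem
        rw [Finset.mem_filter, Finset.mem_Icc] at hmem
        omega
      calc k + 1 ≤ ((Finset.Icc 1 i).filter fun j' => (s j' ω).Prime).card + 1 := by omega
        _ = (insert j ((Finset.Icc 1 i).filter fun j' => (s j' ω).Prime)).card :=
            (Finset.card_insert_of_notMem hnotmem).symm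
        _ ≤ _ := Finset.card_le_card hsub2
  have hcov : Set.univ ⊆ T ∪ ⋃ M : ℕ, B M := by
    intro ω _
    by_cases h : ∀ M, ∃ p, Nat.Prime p ∧ M ≤ p ∧ ∃ j, 1 ≤ j ∧ s j ω = p
    · exact Or.inl (hpt ω h)
    · right
      push_neg at h
      obtain ⟨M, hM⟩ := h
      refine Set.mem_iUnion.mpr ⟨M, ?_⟩
      intro p hp hpM j hj
      exact hM p hp hpM j hj
  have hν : μ (⋃ M : ℕ, B M) = 0 :=
    measure_iUnion_null fun M => bad_null μ d s hmeas hindep hrange hunif hs M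
  have h1 : 1 ≤ μ T := by
    have hμcov := measure_mono (μ := μ) hcov
    rw [measure_univ] at hμcov
    calc (1 : ℝ≥0∞) ≤ μ (T ∪ ⋃ M : ℕ, B M) := hμcov
      _ ≤ μ T + μ (⋃ M : ℕ, B M) := measure_union_le _ _
      _ = μ T := by rw [hν, add_zero]
  exact le_antisymm prob_le_one h1
end
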